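/- arXiv:1512.00083 — 8 statements merged into one kernel-verified Lean document; each statement's English description precedes it below -/
import Mathlib

section
/- For all positive integers a and n with n > ⌈log₂ a⌉ + 1, one has f(n,a) < f(n,a+1); that is, the function f is strictly increasing in a. -/
/-- A family of sets is union-closed if it contains the union of any two of its sets. -/
def UnionClosed (F : Finset (Finset ℕ)) : Prop :=
  ∀ S ∈ F, ∀ T ∈ F, S ∪ T ∈ F

/-- `F` is a family of subsets of `[n] = {0, …, n-1}` (modeled as `Finset.range n`). -/
def FamilyOn (n : ℕ) (F : Finset (Finset ℕ)) : Prop :=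
  ∀ S ∈ F, S ⊆ Finset.range n

/-- The degree of an element `e`: the number of sets of `F` containing `e`. -/
def degOf (F : Finset (Finset ℕ)) (e : ℕ) : ℕ :=
  (F.filter (fun S => e ∈ S)).card

/-- `franklF n a` is the maximum cardinality of a nonempty union-closed family of subsets
of `[n]` in which every element of `[n]` belongs to at most `a` sets. -/
noncomputable def franklF (n a : ℕ) : ℕ :=
  sSup {m | ∃ F : Finset (Finset ℕ), UnionClosed F ∧ FamilyOn n F ∧ F.Nonempty ∧
    (∀ e ∈ Finset.range n, degOf F e ≤ a) ∧ F.card = m}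

/-- `franklG n m` is the minimum, over union-closed families of subsets of `[n]` with
exactly `m` sets, of the maximum degree `max_{e ∈ [n]} |{S ∈ F : e ∈ S}|`. -/
noncomputable def franklG (n m : ℕ) : ℕ :=
  sInf {a | ∃ F : Finset (Finset ℕ), UnionClosed F ∧ FamilyOn n F ∧ F.card = m ∧
    (Finset.range n).sup (degOf F) = a}

/-!
Take a family `F` attaining `f(n,a)`. Every element of `[n]` lies in `2^(n-1) > a` sets of the
full power set, so some subset of `[n]` is missing from `F`; let `S` be an inclusion-maximal one.
For `T ∈ F`, `S ∪ T` is either `S` or a proper superset of `S`, hence lies in `F`, so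
`insert S F` is still union-closed. It has `f(n,a) + 1` sets and every degree grew by at most one.
-/

open Finset

lemma card_le_two_pow_of_familyOn {n : ℕ} {F : Finset (Finset ℕ)} (hF : FamilyOn n F) :
    F.card ≤ 2 ^ n := by
  simpa using card_le_card (fun S hS => mem_powerset.2 (hF S hS) : F ⊆ (range n).powerset)

lemma bddAbove_franklF_set (n a : ℕ) :
    BddAbove {m | ∃ F : Finset (Finset ℕ), UnionClosed F ∧ FamilyOn n F ∧ F.Nonempty ∧
      (∀ e ∈ range n, degOf F e ≤ a) ∧ F.card = m} := by
  refine ⟨2 ^ n, ?_⟩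
  rintro m ⟨F, -, hF, -, -, rfl⟩
  exact card_le_two_pow_of_familyOn hF

lemma card_le_franklF {n a : ℕ} {F : Finset (Finset ℕ)} (hUC : UnionClosed F)
    (hF : FamilyOn n F) (hne : F.Nonempty) (hdeg : ∀ e ∈ range n, degOf F e ≤ a) :
    F.card ≤ franklF n a :=
  le_csSup (bddAbove_franklF_set n a) ⟨F, hUC, hF, hne, hdeg, rfl⟩

lemma exists_card_eq_franklF (n a : ℕ) :
    ∃ F : Finset (Finset ℕ), UnionClosed F ∧ FamilyOn n F ∧ F.Nonempty ∧
      (∀ e ∈ range n, degOf F e ≤ a) ∧ F.card = franklF n a := by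
  refine Nat.sSup_mem ?_ (bddAbove_franklF_set n a)
  refine ⟨1, {∅}, ?_, ?_, singleton_nonempty _, ?_, card_singleton _⟩
  · simp [UnionClosed]
  · simp [FamilyOn]
  · simp [degOf, filter_singleton]

lemma FamilyOn.insert_of_subset {n : ℕ} {F : Finset (Finset ℕ)} {S : Finset ℕ}
    (hF : FamilyOn n F) (hS : S ⊆ range n) : FamilyOn n (insert S F) := by
  intro T hT
  rcases mem_insert.1 hT with rfl | hT
  exacts [hS, hF T hT]

lemma degOf_insert_le (F : Finset (Finset ℕ)) (S : Finset ℕ) (e : ℕ) :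
    degOf (insert S F) e ≤ degOf F e + 1 := by
  unfold degOf
  rw [filter_insert]
  split_ifs
  · exact card_insert_le _ _
  · exact Nat.le_succ _

lemma two_pow_pred_le_degOf {n e : ℕ} {F : Finset (Finset ℕ)} (hF : (range n).powerset ⊆ F)
    (he : e ∈ range n) : 2 ^ (n - 1) ≤ degOf F e := by
  have hinj : Set.InjOn (insert e) (((range n).erase e).powerset : Set (Finset ℕ)) := by
    intro T hT U hU hTU
    simp only [coe_powerset, Set.mem_preimage, Set.mem_powerset_iff, coe_subset] at hT hU
    rw [← erase_insert (a := e) (s := T) (fun h => by simpa using hT h), hTU,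
      erase_insert (fun h => by simpa using hU h)]
  calc 2 ^ (n - 1) = (((range n).erase e).powerset.image (insert e)).card := by
        rw [card_image_of_injOn hinj, card_powerset, card_erase_of_mem he, card_range]
    _ ≤ (F.filter (e ∈ ·)).card := by
        refine card_le_card fun S hS => ?_
        obtain ⟨T, hT, rfl⟩ := mem_image.1 hS
        refine mem_filter.2 ⟨hF (mem_powerset.2 (insert_subset he ?_)), mem_insert_self e T⟩
        exact (mem_powerset.1 hT).trans (erase_subset _ _)

lemma exists_maximal_notMem {n : ℕ} {F : Finset (Finset ℕ)} (h : ¬ (range n).powerset ⊆ F) :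
    ∃ S ⊆ range n, S ∉ F ∧ ∀ T ⊆ range n, S ⊂ T → T ∈ F := by
  obtain ⟨S, hS₀, hSF⟩ := not_subset.1 h
  obtain ⟨S, hS⟩ := exists_maximal
    (s := (range n).powerset.filter (· ∉ F)) ⟨S, mem_filter.2 ⟨hS₀, hSF⟩⟩
  obtain ⟨hSn, hSF⟩ := mem_filter.1 hS.prop
  refine ⟨S, mem_powerset.1 hSn, hSF, fun T hTn hST => ?_⟩
  by_contra hTF
  exact hST.not_ge (hS.le_of_ge (mem_filter.2 ⟨mem_powerset.2 hTn, hTF⟩) hST.le)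

lemma UnionClosed.insert_of_forall_ssuperset_mem {n : ℕ} {F : Finset (Finset ℕ)}
    {S : Finset ℕ} (hUC : UnionClosed F) (hF : FamilyOn n F) (hS : S ⊆ range n)
    (hmax : ∀ T ⊆ range n, S ⊂ T → T ∈ F) :
    UnionClosed (insert S F) := by
  have hunion : ∀ T ∈ F, S ∪ T ∈ insert S F := by
    intro T hT
    by_cases hTS : T ⊆ S
    · rw [union_eq_left.2 hTS]
      exact mem_insert_self S F
    · refine mem_insert_of_mem (hmax _ (union_subset hS (hF T hT)) ?_)
      exact ssubset_of_subset_of_ne subset_union_left fun h => hTS (h ▸ subset_union_right)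
  intro A hA B hB
  rcases mem_insert.1 hA with rfl | hAF
  · rcases mem_insert.1 hB with rfl | hBF
    · rw [union_self]
      exact mem_insert_self _ F
    · exact hunion B hBF
  · rcases mem_insert.1 hB with rfl | hBF
    · rw [union_comm]
      exact hunion A hAF
    · exact mem_insert_of_mem (hUC A hAF B hBF)

lemma lt_two_pow_pred_of_clog_add_one_lt {a n : ℕ} (h : Nat.clog 2 a + 1 < n) :
    a < 2 ^ (n - 1) :=
  (Nat.le_pow_clog one_lt_two a).trans_lt (Nat.pow_lt_pow_right one_lt_two (by omega))

theorem franklF_strictMono_a_general (a n : ℕ)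
    (hlog : Nat.clog 2 a + 1 < n) :
    franklF n a < franklF n (a + 1) := by
  obtain ⟨F, hUC, hF, -, hdeg, hcard⟩ := exists_card_eq_franklF n a
  have h0 : 0 ∈ range n := mem_range.2 (by omega)
  have hmiss : ¬ (range n).powerset ⊆ F := fun hall =>
    (hdeg 0 h0).not_gt
      ((lt_two_pow_pred_of_clog_add_one_lt hlog).trans_le (two_pow_pred_le_degOf hall h0))
  obtain ⟨S, hSn, hSF, hmax⟩ := exists_maximal_notMem hmiss
  have hle := card_le_franklF (a := a + 1) (hUC.insert_of_forall_ssuperset_mem hF hSn hmax)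
    (hF.insert_of_subset hSn) (insert_nonempty S F)
    fun e he => (degOf_insert_le F S e).trans (Nat.add_le_add_right (hdeg e he) 1)
  rw [card_insert_of_notMem hSF, hcard] at hle
  exact hle

/-- The function `f` is strictly increasing in `a`: for all positive integers `a, n`
with `n > ⌈log₂ a⌉ + 1`, one has `f(n,a) < f(n,a+1)`. -/
theorem franklF_strictMono_a (a n : ℕ) (ha : 0 < a) (hn : 0 < n)
    (hlog : Nat.clog 2 a + 1 < n) :
    franklF n a < franklF n (a + 1) :=
  franklF_strictMono_a_general a n hlog
end

section
/- For all positive integers m and n with m ≥ 2 and m + 1 ≤ 2^n (so that both g(n,m) and g(n,m+1) are defined), one has g(n,m) ≤ g(n,m+1); that is, the function g is non-decreasing in m. -/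
/-- Erasing a minimum-cardinality set from a union-closed family keeps it union-closed
and does not increase any degree. -/
lemma erase_min_lemma (F : Finset (Finset ℕ)) (hF : UnionClosed F) (hne : F.Nonempty) :
    ∃ S₀ ∈ F, UnionClosed (F.erase S₀) ∧ ∀ e, degOf (F.erase S₀) e ≤ degOf F e := by
  obtain ⟨S₀, hS₀, hmin⟩ := F.exists_min_image Finset.card hne
  refine ⟨S₀, hS₀, ?_, ?_⟩
  · intro S hS T hT
    have hS' := Finset.mem_of_mem_erase hS
    have hT' := Finset.mem_of_mem_erase hT
    have hU : S ∪ T ∈ F := hF S hS' T hT'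
    rw [Finset.mem_erase]
    refine ⟨fun h => ?_, hU⟩
    have hSsub : S ⊆ S₀ := h ▸ Finset.subset_union_left
    have : S = S₀ := Finset.eq_of_subset_of_card_le hSsub (hmin S hS')
    exact (Finset.ne_of_mem_erase hS) this
  · intro e
    exact Finset.card_le_card (Finset.filter_subset_filter _ (F.erase_subset S₀))

/-- There exists a union-closed family on `[n]` of any size `k ≤ 2^n`. -/
lemma exists_family (n k : ℕ) (hk : k ≤ 2 ^ n) :
    ∃ F : Finset (Finset ℕ), UnionClosed F ∧ FamilyOn n F ∧ F.card = k := by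
  obtain ⟨d, hd⟩ : ∃ d, k + d = 2 ^ n := ⟨2 ^ n - k, by omega⟩
  induction d generalizing k with
  | zero =>
      refine ⟨(Finset.range n).powerset, ?_, ?_, ?_⟩
      · intro S hS T hT
        rw [Finset.mem_powerset] at *
        exact Finset.union_subset hS hT
      · intro S hS; exact Finset.mem_powerset.mp hS
      · simp; omega
  | succ d ih =>
      obtain ⟨F, hFu, hFon, hFc⟩ := ih (k + 1) (by omega) (by omega)
      have hne : F.Nonempty := Finset.card_pos.mp (by omega)
      obtain ⟨S₀, hS₀, hu', _⟩ := erase_min_lemma F hFu hne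
      exact ⟨F.erase S₀, hu', fun S hS => hFon S (Finset.mem_of_mem_erase hS),
        by rw [Finset.card_erase_of_mem hS₀, hFc]; omega⟩

/-- The function `g` is non-decreasing in `m`: for all positive integers `m, n` with
`m ≥ 2` and `m + 1 ≤ 2^n`, one has `g(n,m) ≤ g(n,m+1)`. -/
theorem franklG_mono_m (m n : ℕ) (hm : 2 ≤ m) (hn : 0 < n)
    (hpow : m + 1 ≤ 2 ^ n) :
    franklG n m ≤ franklG n (m + 1) := by
  obtain ⟨F₀, hF₀u, hF₀on, hF₀c⟩ := exists_family n (m + 1) hpow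
  have hTne : {a | ∃ F : Finset (Finset ℕ), UnionClosed F ∧ FamilyOn n F ∧ F.card = m + 1 ∧
      (Finset.range n).sup (degOf F) = a}.Nonempty :=
    ⟨_, F₀, hF₀u, hF₀on, hF₀c, rfl⟩
  have hmem := Nat.sInf_mem hTne
  obtain ⟨F, hFu, hFon, hFc, hFsup⟩ := hmem
  have hne : F.Nonempty := Finset.card_pos.mp (by omega)
  obtain ⟨S₀, hS₀, hu', hdeg⟩ := erase_min_lemma F hFu hne
  have h1 : franklG n m ≤ (Finset.range n).sup (degOf (F.erase S₀)) := by
    apply Nat.sInf_le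
    exact ⟨F.erase S₀, hu', fun S hS => hFon S (Finset.mem_of_mem_erase hS),
      by rw [Finset.card_erase_of_mem hS₀, hFc]; omega, rfl⟩
  have h2 : (Finset.range n).sup (degOf (F.erase S₀)) ≤ (Finset.range n).sup (degOf F) :=
    Finset.sup_mono_fun fun e _ => hdeg e
  calc franklG n m ≤ _ := h1
    _ ≤ _ := h2
    _ = franklG n (m + 1) := hFsup
end

section
/- For all positive integers a and n with n > ⌈log₂ a⌉ + 1, one has g(n, f(n,a)) = a. -/
/-- If some subset of `range n` is missing from a union-closed family `F` on `[n]`,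
then a maximal missing set can be added preserving union-closedness. -/
lemma extend_uc (n : ℕ) (F : Finset (Finset ℕ)) (hUC : UnionClosed F) (hFam : FamilyOn n F)
    (hG : ∃ S ∈ (Finset.range n).powerset, S ∉ F) :
    ∃ S, S ∉ F ∧ S ⊆ Finset.range n ∧ UnionClosed (insert S F) := by
  classical
  set G := (Finset.range n).powerset \ F with hGdef
  have hGne : G.Nonempty := by
    obtain ⟨S, hS1, hS2⟩ := hG
    exact ⟨S, Finset.mem_sdiff.2 ⟨hS1, hS2⟩⟩
  obtain ⟨S, hSG, hmax⟩ := G.exists_max_image Finset.card hGne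
  have hSpow : S ⊆ Finset.range n := Finset.mem_powerset.1 (Finset.mem_sdiff.1 hSG).1
  have hSnot : S ∉ F := (Finset.mem_sdiff.1 hSG).2
  refine ⟨S, hSnot, hSpow, ?_⟩
  have key : ∀ T ∈ F, S ∪ T ∈ insert S F := by
    intro T hT
    by_cases h : S ∪ T = S
    · rw [h]; exact Finset.mem_insert_self _ _
    · have hsub : S ⊆ S ∪ T := Finset.subset_union_left
      have hpow : S ∪ T ⊆ Finset.range n := Finset.union_subset hSpow (hFam T hT)
      have hmem : S ∪ T ∈ F := by
        by_contra hc
        have hG' : S ∪ T ∈ G := Finset.mem_sdiff.2 ⟨Finset.mem_powerset.2 hpow, hc⟩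
        have hle := hmax _ hG'
        have hss : S ⊂ S ∪ T := lt_of_le_of_ne hsub (fun he => h he.symm)
        exact absurd (Finset.card_lt_card hss) (not_lt.2 hle)
      exact Finset.mem_insert_of_mem hmem
  intro X hX Y hY
  rcases Finset.mem_insert.1 hX with rfl | hX'
  · rcases Finset.mem_insert.1 hY with rfl | hY'
    · simpa using Finset.mem_insert_self X F
    · exact key Y hY'
  · rcases Finset.mem_insert.1 hY with rfl | hY'
    · rw [Finset.union_comm]; exact key X hX'
    · exact Finset.mem_insert_of_mem (hUC X hX' Y hY')

/-- If every subset of `range n` lies in `F`, then the degree of `0` is at least `2^(n-1)`. -/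
lemma deg_zero_ge (n : ℕ) (hn : 0 < n) (F : Finset (Finset ℕ))
    (hall : (Finset.range n).powerset ⊆ F) : 2 ^ (n - 1) ≤ degOf F 0 := by
  classical
  set P := ((Finset.range n).erase 0).powerset with hP
  have hcard : P.card = 2 ^ (n - 1) := by
    rw [hP, Finset.card_powerset, Finset.card_erase_of_mem (Finset.mem_range.2 hn),
      Finset.card_range]
  have himg : (P.image (insert 0)) ⊆ F.filter (fun S => 0 ∈ S) := by
    intro X hX
    obtain ⟨S, hS, rfl⟩ := Finset.mem_image.1 hX
    have hSsub : S ⊆ Finset.range n :=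
      (Finset.mem_powerset.1 hS).trans (Finset.erase_subset _ _)
    refine Finset.mem_filter.2 ⟨hall (Finset.mem_powerset.2 ?_), Finset.mem_insert_self _ _⟩
    exact Finset.insert_subset (Finset.mem_range.2 hn) hSsub
  have hinj : Set.InjOn (insert 0) (P : Set (Finset ℕ)) := by
    intro S hS T hT hST
    have h0S : (0 : ℕ) ∉ S := fun h =>
      (Finset.mem_erase.1 ((Finset.mem_powerset.1 hS) h)).1 rfl
    have h0T : (0 : ℕ) ∉ T := fun h =>
      (Finset.mem_erase.1 ((Finset.mem_powerset.1 hT) h)).1 rfl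
    have h := congrArg (fun X => Finset.erase X 0) hST
    simpa [Finset.erase_insert h0S, Finset.erase_insert h0T] using h
  calc 2 ^ (n - 1) = P.card := hcard.symm
    _ = (P.image (insert 0)).card := (Finset.card_image_of_injOn hinj).symm
    _ ≤ _ := Finset.card_le_card himg

/-- For all positive integers `a, n` with `n > ⌈log₂ a⌉ + 1`, one has `g(n, f(n,a)) = a`. -/
theorem franklG_franklF (a n : ℕ) (ha : 0 < a) (hn : 0 < n)
    (hlog : Nat.clog 2 a + 1 < n) :
    franklG n (franklF n a) = a := by
  classical
  set Sf : Set ℕ := {m | ∃ F : Finset (Finset ℕ), UnionClosed F ∧ FamilyOn n F ∧ F.Nonempty ∧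
    (∀ e ∈ Finset.range n, degOf F e ≤ a) ∧ F.card = m} with hSf
  have hfval : franklF n a = sSup Sf := rfl
  -- a is small compared to 2^(n-1)
  have hcap : a ≤ 2 ^ (n - 2) := by
    calc a ≤ 2 ^ Nat.clog 2 a := Nat.le_pow_clog (by norm_num) a
      _ ≤ 2 ^ (n - 2) := Nat.pow_le_pow_right (by norm_num) (by omega)
  have hcap' : a < 2 ^ (n - 1) := by
    have h2 : 2 ^ (n - 2) < 2 ^ (n - 1) := Nat.pow_lt_pow_right (by norm_num) (by omega)
    omega
  have hbdd : BddAbove Sf := by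
    refine ⟨2 ^ n, fun m hm => ?_⟩
    obtain ⟨F, _, hFam, _, _, hcard⟩ := hm
    have hsub : F ⊆ (Finset.range n).powerset := fun S hS =>
      Finset.mem_powerset.2 (hFam S hS)
    calc m = F.card := hcard.symm
      _ ≤ (Finset.range n).powerset.card := Finset.card_le_card hsub
      _ = 2 ^ n := by rw [Finset.card_powerset, Finset.card_range]
  have hne : Sf.Nonempty := by
    refine ⟨1, {∅}, ?_, ?_, ⟨∅, by simp⟩, ?_, by simp⟩
    · intro S hS T hT
      simp only [Finset.mem_singleton] at hS hT
      subst hS; subst hT; simp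
    · intro S hS; simp only [Finset.mem_singleton] at hS; subst hS; simp
    · intro e _; rw [degOf, Finset.filter_singleton]; simp
  have hmem := Nat.sSup_mem hne hbdd
  rw [← hfval] at hmem
  obtain ⟨F₀, hUC₀, hFam₀, hne₀, hdeg₀, hcard₀⟩ := hmem
  -- key: any UC family on [n] with f(n,a) sets has max degree at least a
  have hkey : ∀ F : Finset (Finset ℕ), UnionClosed F → FamilyOn n F →
      F.card = franklF n a → a ≤ (Finset.range n).sup (degOf F) := by
    intro F hUC hFam hcard
    by_contra hlt
    push_neg at hlt
    have hdegs : ∀ e ∈ Finset.range n, degOf F e < a := fun e he =>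
      lt_of_le_of_lt (Finset.le_sup he) hlt
    -- F cannot contain the whole powerset
    have hG : ∃ S ∈ (Finset.range n).powerset, S ∉ F := by
      by_contra hc
      push_neg at hc
      have hall : (Finset.range n).powerset ⊆ F := fun S hS => hc S hS
      have h1 := deg_zero_ge n hn F hall
      have h2 := hdegs 0 (Finset.mem_range.2 hn)
      omega
    obtain ⟨S, hSnot, hSsub, hUC'⟩ := extend_uc n F hUC hFam hG
    have hmem' : F.card + 1 ∈ Sf := by
      refine ⟨insert S F, hUC', ?_, ⟨S, Finset.mem_insert_self _ _⟩, ?_, ?_⟩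
      · intro T hT
        rcases Finset.mem_insert.1 hT with rfl | hT'
        · exact hSsub
        · exact hFam T hT'
      · intro e he
        have hd : degOf (insert S F) e ≤ degOf F e + 1 := by
          unfold degOf
          rw [Finset.filter_insert]
          split
          · exact le_trans (Finset.card_insert_le _ _) (by omega)
          · omega
        have := hdegs e he
        omega
      · rw [Finset.card_insert_of_notMem hSnot]
    have hle := le_csSup hbdd hmem'
    rw [← hfval] at hle
    omega
  -- the G-set
  set Ag : Set ℕ := {b | ∃ F : Finset (Finset ℕ), UnionClosed F ∧ FamilyOn n F ∧
    F.card = franklF n a ∧ (Finset.range n).sup (degOf F) = b} with hAg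
  have hgval : franklG n (franklF n a) = sInf Ag := rfl
  have hd₀ : (Finset.range n).sup (degOf F₀) ∈ Ag := ⟨F₀, hUC₀, hFam₀, hcard₀, rfl⟩
  have hd₀le : (Finset.range n).sup (degOf F₀) ≤ a := Finset.sup_le hdeg₀
  have hd₀ge : a ≤ (Finset.range n).sup (degOf F₀) := hkey F₀ hUC₀ hFam₀ hcard₀
  rw [hgval]
  refine le_antisymm ?_ ?_
  · calc sInf Ag ≤ (Finset.range n).sup (degOf F₀) := Nat.sInf_le hd₀
      _ ≤ a := hd₀le
  · refine le_csInf ⟨_, hd₀⟩ ?_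
    rintro b ⟨F, hUC, hFam, hcard, rfl⟩
    exact hkey F hUC hFam hcard
end

section
/- Assume the g-conjecture: g(n,m) = g(n+1,m) for all positive integers m, n with m ≥ 2 and n ≥ ⌈log₂ m⌉. Assume also the Bruhn–Schaudt bound: every union-closed family F of subsets of [n] with 2^{n-1} < |F| ≤ 2^n contains an element belonging to at least (6/13)·|F| of its sets. Then every union-closed family F of subsets of [n] (for any n, with 2 ≤ |F|) contains an element belonging to at least (6/13)·|F| of its sets; equivalently, g(n,m) ≥ (6/13)·m for all m ≥ 2 and n ≥ ⌈log₂ m⌉. -/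
/-!
Let `m = |F| ≥ 2` and `k = ⌈log₂ m⌉ ≤ n`, so that `2^(k-1) < m ≤ 2^k`. The `g`-conjecture
gives `g(n,m) = g(k,m)`, and the Bruhn–Schaudt bound applied to an extremal family for
`g(k,m)` gives `6m ≤ 13·g(k,m)`. Since `g(n,m)` is at most the maximum degree of `F`, some
element of `F` has degree at least `(6/13)·m`. An extremal family for `g(k,m)` exists because
`g(k,m) = g(n,m) > 0`, which rules out the junk value `sInf ∅ = 0`.
-/

open Finset

section

variable {n m : ℕ} {F : Finset (Finset ℕ)}

theorem FamilyOn.card_le_two_pow (hF : FamilyOn n F) : F.card ≤ 2 ^ n := by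
  calc F.card ≤ (range n).powerset.card :=
        card_le_card fun S hS => mem_powerset.mpr (hF S hS)
    _ = 2 ^ n := by rw [card_powerset, card_range]

theorem FamilyOn.sup_degOf_pos (hF : FamilyOn n F) (hcard : 2 ≤ F.card) :
    0 < (range n).sup (degOf F) := by
  obtain ⟨S, hS, hS_ne⟩ : ∃ S ∈ F, S ≠ ∅ := by
    by_contra! h
    have : F ⊆ {∅} := fun S hS => mem_singleton.mpr (h S hS)
    have := card_le_card this
    simp only [card_singleton] at this
    omega
  obtain ⟨e, he⟩ := nonempty_iff_ne_empty.mpr hS_ne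
  have hdeg : 0 < degOf F e := card_pos.mpr ⟨S, mem_filter.mpr ⟨hS, he⟩⟩
  exact hdeg.trans_le (le_sup (hF S hS he))

theorem franklG_card_le_sup_degOf (hUC : UnionClosed F) (hF : FamilyOn n F) :
    franklG n F.card ≤ (range n).sup (degOf F) :=
  Nat.sInf_le ⟨F, hUC, hF, rfl, rfl⟩

theorem franklG_card_pos (hUC : UnionClosed F) (hF : FamilyOn n F) (hcard : 2 ≤ F.card) :
    0 < franklG n F.card := by
  obtain ⟨G, -, hG, hG_card, hG_sup⟩ : franklG n F.card ∈ _ :=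
    Nat.sInf_mem ⟨_, F, hUC, hF, rfl, rfl⟩
  rw [← hG_sup]
  exact hG.sup_degOf_pos (hG_card ▸ hcard)

theorem exists_sup_degOf_eq_franklG (hpos : 0 < franklG n m) :
    ∃ F : Finset (Finset ℕ), UnionClosed F ∧ FamilyOn n F ∧ F.card = m ∧
      (range n).sup (degOf F) = franklG n m :=
  Nat.sInf_mem (Nat.nonempty_of_pos_sInf hpos)

theorem franklG_eq_franklG_clog
    (gconj : ∀ m n : ℕ, 2 ≤ m → 0 < n → Nat.clog 2 m ≤ n →
      franklG n m = franklG (n + 1) m)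
    (hm : 2 ≤ m) (hn : Nat.clog 2 m ≤ n) :
    franklG n m = franklG (Nat.clog 2 m) m := by
  induction n, hn using Nat.le_induction with
  | base => rfl
  | succ n hn ih =>
    have hclog_pos : 0 < Nat.clog 2 m := Nat.clog_pos one_lt_two hm
    rw [← gconj m n hm (hclog_pos.trans_le hn) hn, ih]

theorem six_mul_le_thirteen_mul_franklG_clog
    (BS : ∀ (n : ℕ) (F : Finset (Finset ℕ)), UnionClosed F → FamilyOn n F →
      2 ^ (n - 1) < F.card → F.card ≤ 2 ^ n →
      ∃ e ∈ range n, 6 * F.card ≤ 13 * degOf F e)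
    (hm : 2 ≤ m) (hpos : 0 < franklG (Nat.clog 2 m) m) :
    6 * m ≤ 13 * franklG (Nat.clog 2 m) m := by
  obtain ⟨G, hUC, hG, rfl, hG_sup⟩ := exists_sup_degOf_eq_franklG hpos
  obtain ⟨e, he, hdeg⟩ := BS _ G hUC hG (Nat.pow_pred_clog_lt_self one_lt_two hm)
    (Nat.le_pow_clog one_lt_two _)
  have : degOf G e ≤ franklG (Nat.clog 2 G.card) G.card := hG_sup ▸ le_sup he
  omega

end

/-- If the `g`-conjecture holds, then by the Bruhn–Schaudt bound, every union-closed
family `F` of subsets of `[n]` with at least two sets contains an element belonging to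
at least `(6/13)·|F|` of its sets. -/
theorem franklG_six_thirteenths
    (gconj : ∀ m n : ℕ, 2 ≤ m → 0 < n → Nat.clog 2 m ≤ n →
      franklG n m = franklG (n + 1) m)
    (BS : ∀ (n : ℕ) (F : Finset (Finset ℕ)), UnionClosed F → FamilyOn n F →
      2 ^ (n - 1) < F.card → F.card ≤ 2 ^ n →
      ∃ e ∈ Finset.range n, 6 * F.card ≤ 13 * degOf F e) :
    ∀ (n : ℕ) (F : Finset (Finset ℕ)), UnionClosed F → FamilyOn n F → 2 ≤ F.card →
      ∃ e ∈ Finset.range n, 6 * F.card ≤ 13 * degOf F e := by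
  intro n F hUC hF hcard
  have hclog : Nat.clog 2 F.card ≤ n :=
    (Nat.clog_le_iff_le_pow one_lt_two).mpr hF.card_le_two_pow
  have hG : franklG n F.card = franklG (Nat.clog 2 F.card) F.card :=
    franklG_eq_franklG_clog gconj hcard hclog
  have hpos := franklG_card_pos hUC hF hcard
  have hbound := six_mul_le_thirteen_mul_franklG_clog BS hcard (hG ▸ hpos)
  have hrange : (range n).Nonempty := by
    by_contra! h
    simpa [h] using hF.sup_degOf_pos hcard
  obtain ⟨e, he, hsup⟩ := exists_mem_eq_sup (range n) hrange (degOf F)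
  refine ⟨e, he, ?_⟩
  have := franklG_card_le_sup_degOf hUC hF
  rw [hsup] at this
  omega
end

section
/- Let a and n be positive integers with n ≥ ⌈log₂ a⌉ + 1, and suppose f(n,a) < f(n+1,a). Then every union-closed family F of subsets of [n+1] in which every element lies in at most a sets and with |F| = f(n+1,a) (i.e., every optimal family for f(n+1,a)) has the property that every element e ∈ [n+1] is a twin difference in F, i.e., there exists S ∈ F with e ∉ S and S ∪ {e} ∈ F. -/
/-- The number of twin pairs with twin difference `e`: sets `S ∈ F` with `e ∉ S`
and `S ∪ {e} ∈ F`. -/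
def twinCount (F : Finset (Finset ℕ)) (e : ℕ) : ℕ :=
  (F.filter (fun S => e ∉ S ∧ insert e S ∈ F)).card

/-- `e` is a non-trivial twin difference in `F` (as a family of subsets of `[n]`):
there is `S ∈ F` with `e ∉ S`, `S ∪ {e} ∈ F` and `S ∪ {e} ≠ [n]`. -/
def NonTrivialTwinDiff (n : ℕ) (F : Finset (Finset ℕ)) (e : ℕ) : Prop :=
  ∃ S ∈ F, e ∉ S ∧ insert e S ∈ F ∧ insert e S ≠ Finset.range n

/-- `franklFt n a`: maximum cardinality of a union-closed family of subsets of `[n]`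
where every element of `[n]` lies in at most `a` sets and every element of `[n]` is a
non-trivial twin difference. -/
noncomputable def franklFt (n a : ℕ) : ℕ :=
  sSup {m | ∃ F : Finset (Finset ℕ), UnionClosed F ∧ FamilyOn n F ∧
    (∀ e ∈ Finset.range n, degOf F e ≤ a) ∧
    (∀ e ∈ Finset.range n, NonTrivialTwinDiff n F e) ∧ F.card = m}

/-- `franklGt n m`: minimum of the maximum degree over union-closed families of subsets
of `[n]` with exactly `m` sets in which every element of `[n]` is a non-trivial twin
difference. -/
noncomputable def franklGt (n m : ℕ) : ℕ :=
  sInf {a | ∃ F : Finset (Finset ℕ), UnionClosed F ∧ FamilyOn n F ∧ F.card = m ∧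
    (∀ e ∈ Finset.range n, NonTrivialTwinDiff n F e) ∧
    (Finset.range n).sup (degOf F) = a}

/-- If `f(n,a) < f(n+1,a)` (with `a, n` positive and `n ≥ ⌈log₂ a⌉ + 1`), then in every
optimal family for `f(n+1,a)`, every element of `[n+1]` is a twin difference:
there is `S ∈ F` with `e ∉ S` and `S ∪ {e} ∈ F`. -/
theorem twin_difference_of_f_increase (a n : ℕ) (ha : 0 < a) (hn : 0 < n)
    (hlog : Nat.clog 2 a + 1 ≤ n) (hlt : franklF n a < franklF (n + 1) a)
    (F : Finset (Finset ℕ)) (hUC : UnionClosed F) (hFam : FamilyOn (n + 1) F)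
    (hdeg : ∀ e ∈ Finset.range (n + 1), degOf F e ≤ a)
    (hopt : F.card = franklF (n + 1) a) :
    ∀ e ∈ Finset.range (n + 1), ∃ S ∈ F, e ∉ S ∧ insert e S ∈ F := by
  intro e he
  by_contra htwin
  push_neg at htwin
  have hen : e ≤ n := Nat.lt_succ_iff.mp (Finset.mem_range.mp he)
  -- the relabeling map
  set m : ℕ → ℕ := fun x => if x < e then x else x - 1 with hm
  have hminj : ∀ x y : ℕ, x ≠ e → y ≠ e → m x = m y → x = y := by
    intro x y hx hy hxy
    simp only [hm] at hxy
    split_ifs at hxy <;> omega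
  set g : Finset ℕ → Finset ℕ := fun S => (S.erase e).image m with hg
  -- injectivity of g on F
  have hginj : Set.InjOn g F := by
    intro S hS T hT hST
    have herase : S.erase e = T.erase e := by
      have key : ∀ (A B : Finset ℕ), g A = g B → A.erase e ⊆ B.erase e := by
        intro A B hAB x hx
        have hmem : m x ∈ (B.erase e).image m := by
          rw [← show g B = (B.erase e).image m from rfl, ← hAB]
          exact Finset.mem_image_of_mem m hx
        obtain ⟨y, hy, hyx⟩ := Finset.mem_image.mp hmem
        have := hminj y x (Finset.ne_of_mem_erase hy) (Finset.ne_of_mem_erase hx) hyx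
        rwa [← this]
      exact Finset.Subset.antisymm (key S T hST) (key T S hST.symm)
    by_cases heS : e ∈ S <;> by_cases heT : e ∈ T
    · calc S = insert e (S.erase e) := (Finset.insert_erase heS).symm
        _ = insert e (T.erase e) := by rw [herase]
        _ = T := Finset.insert_erase heT
    · exfalso
      have hTe : T.erase e = T := Finset.erase_eq_of_notMem heT
      have : insert e T = S := by
        rw [← hTe, ← herase]; exact Finset.insert_erase heS
      exact htwin T hT heT (this ▸ hS)
    · exfalso
      have hSe : S.erase e = S := Finset.erase_eq_of_notMem heS
      have : insert e S = T := by
        rw [← hSe, herase]; exact Finset.insert_erase heT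
      exact htwin S hS heS (this ▸ hT)
    · rw [← Finset.erase_eq_of_notMem heS, ← Finset.erase_eq_of_notMem heT, herase]
  set F' : Finset (Finset ℕ) := F.image g with hF'
  have hcard : F'.card = F.card := Finset.card_image_of_injOn hginj
  -- union closedness
  have hgu : ∀ S T : Finset ℕ, g (S ∪ T) = g S ∪ g T := by
    intro S T
    simp only [hg, Finset.erase_union_distrib, Finset.image_union]
  have hUC' : UnionClosed F' := by
    intro s hs t ht
    obtain ⟨S, hS, rfl⟩ := Finset.mem_image.mp hs
    obtain ⟨T, hT, rfl⟩ := Finset.mem_image.mp ht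
    rw [← hgu]
    exact Finset.mem_image_of_mem g (hUC S hS T hT)
  -- family on n
  have hFam' : FamilyOn n F' := by
    intro s hs x hx
    obtain ⟨S, hS, rfl⟩ := Finset.mem_image.mp hs
    obtain ⟨y, hy, rfl⟩ := Finset.mem_image.mp hx
    have hyne : y ≠ e := Finset.ne_of_mem_erase hy
    have hyn : y < n + 1 := Finset.mem_range.mp (hFam S hS (Finset.mem_of_mem_erase hy))
    simp only [hm, Finset.mem_range]
    split_ifs <;> omega
  -- degrees
  have hdeg' : ∀ f ∈ Finset.range n, degOf F' f ≤ a := by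
    intro f hf
    have hfn : f < n := Finset.mem_range.mp hf
    set x : ℕ := if f < e then f else f + 1 with hx
    have hxrange : x ∈ Finset.range (n + 1) := by
      simp only [hx, Finset.mem_range]; split_ifs <;> omega
    have hkey : ∀ S ∈ F, (f ∈ g S ↔ x ∈ S) := by
      intro S hS
      constructor
      · intro hfg
        obtain ⟨y, hy, hyf⟩ := Finset.mem_image.mp hfg
        have hyne : y ≠ e := Finset.ne_of_mem_erase hy
        have hyS : y ∈ S := Finset.mem_of_mem_erase hy
        have : x = y := by
          simp only [hm] at hyf
          simp only [hx]
          split_ifs at hyf ⊢ <;> omega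
        rwa [this]
      · intro hxS
        have hxne : x ≠ e := by simp only [hx]; split_ifs <;> omega
        have : x ∈ S.erase e := Finset.mem_erase.mpr ⟨hxne, hxS⟩
        have hmx : m x = f := by
          simp only [hm, hx]; split_ifs <;> omega
        exact hmx ▸ Finset.mem_image_of_mem m this
    have hfilter : F'.filter (fun s => f ∈ s) = (F.filter (fun S => x ∈ S)).image g := by
      ext s
      simp only [Finset.mem_filter, Finset.mem_image, hF']
      constructor
      · rintro ⟨⟨S, hS, rfl⟩, hfs⟩
        exact ⟨S, ⟨hS, (hkey S hS).mp hfs⟩, rfl⟩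
      · rintro ⟨S, ⟨hS, hxS⟩, rfl⟩
        exact ⟨⟨S, hS, rfl⟩, (hkey S hS).mpr hxS⟩
    have : degOf F' f = degOf F x := by
      unfold degOf
      rw [hfilter]
      exact Finset.card_image_of_injOn (hginj.mono (fun S hS => (Finset.mem_filter.mp hS).1))
    rw [this]
    exact hdeg x hxrange
  -- nonempty
  have hFpos : 0 < F.card := by omega
  have hne' : F'.Nonempty := by
    rw [← Finset.card_pos, hcard]; exact hFpos
  -- bounded above
  have hbdd : BddAbove {m | ∃ F : Finset (Finset ℕ), UnionClosed F ∧ FamilyOn n F ∧ F.Nonempty ∧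
      (∀ e ∈ Finset.range n, degOf F e ≤ a) ∧ F.card = m} := by
    refine ⟨2 ^ n, ?_⟩
    rintro k ⟨G, -, hG2, -, -, rfl⟩
    calc G.card ≤ (Finset.range n).powerset.card :=
          Finset.card_le_card (fun S hS => Finset.mem_powerset.mpr (hG2 S hS))
      _ = 2 ^ n := by rw [Finset.card_powerset, Finset.card_range]
  have hmem : F.card ∈ {m | ∃ F : Finset (Finset ℕ), UnionClosed F ∧ FamilyOn n F ∧ F.Nonempty ∧
      (∀ e ∈ Finset.range n, degOf F e ≤ a) ∧ F.card = m} :=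
    ⟨F', hUC', hFam', hne', hdeg', hcard⟩
  have : F.card ≤ franklF n a := le_csSup hbdd hmem
  omega
end

section
/- For all positive integers a and n with n > a, one has f(n-1, a) = f(n, a). -/
/-!
Embedding `[n-1]` into `[n]` gives `f(n-1,a) ≤ f(n,a)`. Conversely, let `F` be union-closed on
`[n]` with all degrees at most `a < n`. If deleting some element `e` is injective on `F`, then
`F` minus `e` is an equally large family on `n - 1` points. Otherwise every `e` has a critical
pair `S, S ∪ {e} ∈ F`. Let `V e` be the largest set of `F` avoiding `e`. The critical pairs make
`e ↦ V e` injective, and if `V e₀` is minimal then every other `V e` contains `e₀`. Together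
with `⋃ F` this gives `n` sets containing `e₀`, contradicting `deg e₀ ≤ a < n`.
-/

open Finset

section Families

variable {F : Finset (Finset ℕ)} {m n a e : ℕ}

lemma UnionClosed.supClosed (hF : UnionClosed F) : SupClosed (F : Set (Finset ℕ)) :=
  fun S hS T hT => hF S hS T hT

lemma UnionClosed.image {g : Finset ℕ → Finset ℕ} (hF : UnionClosed F)
    (hg : ∀ S T, g (S ∪ T) = g S ∪ g T) : UnionClosed (F.image g) := by
  simp only [UnionClosed, forall_mem_image, ← hg]
  exact fun S hS T hT => mem_image_of_mem g (hF S hS T hT)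

lemma FamilyOn.mono (hmn : m ≤ n) (hF : FamilyOn m F) : FamilyOn n F :=
  fun S hS => (hF S hS).trans (range_subset_range.2 hmn)

lemma FamilyOn.degOf_eq_zero (hF : FamilyOn n F) (he : n ≤ e) : degOf F e = 0 :=
  card_eq_zero.2 <| filter_eq_empty_iff.2 fun S hS heS =>
    (mem_range.1 (hF S hS heS)).not_ge he

lemma FamilyOn.degOf_le (hF : FamilyOn n F) (hdeg : ∀ e ∈ range n, degOf F e ≤ a) (e : ℕ) :
    degOf F e ≤ a := by
  rcases lt_or_ge e n with he | he
  · exact hdeg e (mem_range.2 he)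
  · simp [hF.degOf_eq_zero he]

lemma degOf_image_le (g : Finset ℕ → Finset ℕ) {x y : ℕ} (h : ∀ S ∈ F, x ∈ g S → y ∈ S) :
    degOf (F.image g) x ≤ degOf F y :=
  calc degOf (F.image g) x ≤ ((F.filter (y ∈ ·)).image g).card := by
        refine card_le_card fun T hT => ?_
        obtain ⟨hTF, hxT⟩ := mem_filter.1 hT
        obtain ⟨S, hS, rfl⟩ := mem_image.1 hTF
        exact mem_image_of_mem g (mem_filter.2 ⟨hS, h S hS hxT⟩)
    _ ≤ degOf F y := card_image_le

lemma exists_insert_mem_of_not_injOn_erase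
    (h : ¬ Set.InjOn (·.erase e) (F : Set (Finset ℕ))) : ∃ S ∈ F, e ∉ S ∧ insert e S ∈ F := by
  simp only [Set.InjOn, mem_coe, not_forall] at h
  obtain ⟨S, hS, T, hT, hST, hne⟩ := h
  by_cases heS : e ∈ S <;> by_cases heT : e ∈ T
  · exact absurd (erase_injOn' e heS heT hST) hne
  · refine ⟨T, hT, heT, ?_⟩
    rwa [← erase_eq_of_notMem heT, ← hST, insert_erase heS]
  · refine ⟨S, hS, heS, ?_⟩
    rwa [← erase_eq_of_notMem heS, hST, insert_erase heT]
  · exact absurd (by rwa [erase_eq_of_notMem heS, erase_eq_of_notMem heT] at hST) hne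

end Families

section MaxAvoiding

variable {F : Finset (Finset ℕ)} {S : Finset ℕ} {e e' : ℕ}

/-- The largest set of `F` avoiding `e`, when `F` is union-closed. -/
def maxAvoiding (F : Finset (Finset ℕ)) (e : ℕ) : Finset ℕ :=
  (F.filter (e ∉ ·)).sup id

lemma notMem_maxAvoiding : e ∉ maxAvoiding F e := by
  simp [maxAvoiding]

lemma subset_maxAvoiding (hS : S ∈ F) (heS : e ∉ S) : S ⊆ maxAvoiding F e :=
  le_sup (f := id) (mem_filter.2 ⟨hS, heS⟩)

lemma UnionClosed.maxAvoiding_mem (hF : UnionClosed F) (hS : S ∈ F) (heS : e ∉ S) :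
    maxAvoiding F e ∈ F :=
  hF.supClosed.finsetSup_mem ⟨S, mem_filter.2 ⟨hS, heS⟩⟩ fun _ hT => (mem_filter.1 hT).1

lemma mem_of_not_subset_maxAvoiding (hS : S ∈ F) (h : ¬ S ⊆ maxAvoiding F e) : e ∈ S := by
  by_contra heS
  exact h (subset_maxAvoiding hS heS)

lemma eq_of_maxAvoiding_eq (hS : S ∈ F) (he'S : e' ∉ S) (hins : insert e' S ∈ F)
    (h : maxAvoiding F e = maxAvoiding F e') : e = e' := by
  by_contra hne
  by_cases heS : e ∈ S
  · exact notMem_maxAvoiding (h ▸ subset_maxAvoiding hS he'S heS)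
  · have : insert e' S ⊆ maxAvoiding F e' :=
      h ▸ subset_maxAvoiding hins (by simp [hne, heS])
    exact notMem_maxAvoiding (this (mem_insert_self e' S))

end MaxAvoiding

theorem UnionClosed.exists_card_le_degOf {F : Finset (Finset ℕ)} (hF : UnionClosed F)
    {X : Finset ℕ} (hX : X.Nonempty) (hcrit : ∀ e ∈ X, ∃ S ∈ F, e ∉ S ∧ insert e S ∈ F) :
    ∃ e ∈ X, X.card ≤ degOf F e := by
  choose! crit hcritF hcritNotMem hcritInsert using hcrit
  set V := maxAvoiding F
  have hVF : ∀ e ∈ X, V e ∈ F := fun e he =>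
    hF.maxAvoiding_mem (hcritF e he) (hcritNotMem e he)
  have hVinj : Set.InjOn V X := fun e _ e' he' h =>
    eq_of_maxAvoiding_eq (hcritF e' he') (hcritNotMem e' he') (hcritInsert e' he') h
  obtain ⟨e₀, he₀, hmin⟩ := X.exists_minimalFor V hX
  have hmem_V : ∀ e ∈ X.erase e₀, e₀ ∈ V e := by
    intro e he
    obtain ⟨hne, heX⟩ := mem_erase.1 he
    refine mem_of_not_subset_maxAvoiding (hVF e heX) fun hsub => hne ?_
    exact hVinj heX he₀ (le_antisymm hsub (hmin heX hsub))
  set M := F.sup id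
  have hMF : M ∈ F := hF.supClosed.finsetSup_mem ⟨_, hcritF e₀ he₀⟩ fun S hS => hS
  have hXM : ∀ e ∈ X, e ∈ M := fun e he =>
    mem_sup.2 ⟨_, hcritInsert e he, mem_insert_self e _⟩
  have hM_notMem : M ∉ (X.erase e₀).image V := by
    simp only [mem_image, not_exists, not_and]
    exact fun e he hVM => notMem_maxAvoiding (hVM ▸ hXM e (mem_of_mem_erase he))
  refine ⟨e₀, he₀, ?_⟩
  calc X.card = (insert M ((X.erase e₀).image V)).card := by
        rw [card_insert_of_notMem hM_notMem, card_image_of_injOn (hVinj.mono (by simp)),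
          card_erase_add_one he₀]
    _ ≤ degOf F e₀ := by
        refine card_le_card fun S hS => mem_filter.2 ?_
        rcases mem_insert.1 hS with rfl | hS
        · exact ⟨hMF, hXM e₀ he₀⟩
        · obtain ⟨e, he, rfl⟩ := mem_image.1 hS
          exact ⟨hVF e (mem_of_mem_erase he), hmem_V e he⟩

/-- The new family deletes `e` and renames `n - 1` to `e`. -/
lemma UnionClosed.exists_familyOn_pred_of_injOn_erase {F : Finset (Finset ℕ)} {n e : ℕ}
    (hF : UnionClosed F) (hFam : FamilyOn n F) (he : e < n)
    (hinj : Set.InjOn (·.erase e) (F : Set (Finset ℕ))) :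
    ∃ F' : Finset (Finset ℕ), UnionClosed F' ∧ FamilyOn (n - 1) F' ∧ F'.card = F.card ∧
      ∀ x, ∃ y, degOf F' x ≤ degOf F y := by
  set σ := Equiv.swap e (n - 1)
  set g : Finset ℕ → Finset ℕ := fun S => (S.erase e).image σ
  refine ⟨F.image g, hF.image fun S T => ?_, ?_, ?_, fun x => ⟨σ x, degOf_image_le g ?_⟩⟩
  · simp only [g, erase_union_distrib, image_union]
  · simp only [FamilyOn, forall_mem_image, g, image_subset_iff, mem_erase, mem_range]
    intro S hS y ⟨hye, hyS⟩
    have hy := mem_range.1 (hFam S hS hyS)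
    rcases eq_or_ne y (n - 1) with rfl | hyn
    · rw [Equiv.swap_apply_right]; omega
    · rw [Equiv.swap_apply_of_ne_of_ne hye hyn]; omega
  · exact card_image_of_injOn fun S hS T hT hST => hinj hS hT (image_injective σ.injective hST)
  · intro S _ hx
    obtain ⟨y, hy, rfl⟩ := mem_image.1 hx
    simpa [σ] using mem_of_mem_erase hy

lemma UnionClosed.exists_familyOn_pred {F : Finset (Finset ℕ)} {n a : ℕ} (hF : UnionClosed F)
    (hFam : FamilyOn n F) (hdeg : ∀ e ∈ range n, degOf F e ≤ a) (hn : a < n) :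
    ∃ F' : Finset (Finset ℕ), UnionClosed F' ∧ FamilyOn (n - 1) F' ∧ F'.card = F.card ∧
      ∀ x, degOf F' x ≤ a := by
  by_cases h : ∃ e < n, Set.InjOn (·.erase e) (F : Set (Finset ℕ))
  · obtain ⟨e, he, hinj⟩ := h
    obtain ⟨F', hF', hFam', hcard, hdeg'⟩ := hF.exists_familyOn_pred_of_injOn_erase hFam he hinj
    refine ⟨F', hF', hFam', hcard, fun x => ?_⟩
    obtain ⟨y, hy⟩ := hdeg' x
    exact hy.trans (hFam.degOf_le hdeg y)
  · push Not at h
    obtain ⟨e, he, hne⟩ := hF.exists_card_le_degOf (nonempty_range_iff.2 (by omega))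
      fun e he => exists_insert_mem_of_not_injOn_erase (h e (mem_range.1 he))
    have := hdeg e he
    simp only [card_range] at hne
    omega

theorem franklF_stable_of_gt_general (a n : ℕ) (hn : a < n) :
    franklF (n - 1) a = franklF n a := by
  unfold franklF
  congr 1
  ext m
  constructor
  · rintro ⟨F, hF, hFam, hne, hdeg, rfl⟩
    exact ⟨F, hF, hFam.mono (Nat.sub_le n 1), hne, fun e _ => hFam.degOf_le hdeg e, rfl⟩
  · rintro ⟨F, hF, hFam, hne, hdeg, rfl⟩
    obtain ⟨F', hF', hFam', hcard, hdeg'⟩ := hF.exists_familyOn_pred hFam hdeg hn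
    exact ⟨F', hF', hFam', card_pos.1 (hcard ▸ hne.card_pos), fun e _ => hdeg' e, hcard⟩

/-- For all positive integers `a, n` with `n > a`, one has `f(n-1,a) = f(n,a)`. -/
theorem franklF_stable_of_gt (a n : ℕ) (ha : 0 < a) (hn : a < n) :
    franklF (n - 1) a = franklF n a :=
  franklF_stable_of_gt_general a n hn
end

section
/- For all positive integers m and n with m ≥ 2 and n ≥ m - 1, one has g(n,m) = g(n+1,m). -/
/- ------------------ auxiliary lemmas ------------------ -/

lemma sup_mem_of_unionClosed {F G : Finset (Finset ℕ)} (hUC : UnionClosed F)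
    (hG : G ⊆ F) (hne : G.Nonempty) : G.sup id ∈ F := by
  rw [← Finset.sup'_eq_sup hne]
  refine Finset.sup'_mem (↑F : Set (Finset ℕ)) ?_ G hne id (fun i hi => hG hi)
  intro x hx y hy
  exact hUC x hx y hy

/-- Key structural lemma: if `F` is union-closed with at most `n+1` sets
(and at least 2), then some element `e ∈ [n+1]` can be erased injectively. -/
lemma exists_erase_inj {n m : ℕ} (F : Finset (Finset ℕ)) (hUC : UnionClosed F)
    (hcard : F.card = m) (hm : 2 ≤ m) (hmn : m ≤ n + 1) :
    ∃ e ∈ Finset.range (n + 1), ∀ S ∈ F, ∀ T ∈ F, S.erase e = T.erase e → S = T := by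
  by_contra hbad
  push_neg at hbad
  have hFne : F.Nonempty := Finset.card_pos.mp (by omega)
  set U : Finset ℕ := F.sup id with hUdef
  have hU : U ∈ F := sup_mem_of_unionClosed hUC (le_refl F) hFne
  -- For each e in range (n+1): a set missing e and a set containing e
  have hsplit : ∀ e ∈ Finset.range (n + 1),
      (∃ T ∈ F, e ∉ T) ∧ (∃ S ∈ F, e ∈ S) := by
    intro e he
    obtain ⟨S, hS, T, hT, heq, hne⟩ := hbad e he
    by_cases heS : e ∈ S <;> by_cases heT : e ∈ T
    · exact absurd (by rw [← Finset.insert_erase heS, heq, Finset.insert_erase heT]) hne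
    · exact ⟨⟨T, hT, heT⟩, ⟨S, hS, heS⟩⟩
    · exact ⟨⟨S, hS, heS⟩, ⟨T, hT, heT⟩⟩
    · exact absurd (by rw [← Finset.erase_eq_of_notMem heS, heq,
        Finset.erase_eq_of_notMem heT]) hne
  -- no two distinct elements of range (n+1) are equivalent
  have hnequiv : ∀ e ∈ Finset.range (n + 1), ∀ f ∈ Finset.range (n + 1), e ≠ f →
      ∃ S ∈ F, ¬ (e ∈ S ↔ f ∈ S) := by
    intro e he f hf hef
    by_contra hcon
    push_neg at hcon
    obtain ⟨S, hS, T, hT, heq, hne⟩ := hbad f hf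
    have hiff : ∀ W ∈ F, (e ∈ W ↔ f ∈ W) := fun W hW => (hcon W hW)
    have hST : (f ∈ S) ↔ (f ∈ T) := by
      rw [← hiff S hS, ← hiff T hT]
      constructor <;> intro h
      · have : e ∈ S.erase f := Finset.mem_erase.mpr ⟨hef, h⟩
        rw [heq] at this; exact (Finset.mem_erase.mp this).2
      · have : e ∈ T.erase f := Finset.mem_erase.mpr ⟨hef, h⟩
        rw [← heq] at this; exact (Finset.mem_erase.mp this).2
    apply hne
    by_cases hfS : f ∈ S
    · rw [← Finset.insert_erase hfS, heq, Finset.insert_erase (hST.mp hfS)]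
    · rw [← Finset.erase_eq_of_notMem hfS, heq,
        Finset.erase_eq_of_notMem (fun h => hfS (hST.mpr h))]
  -- the maximal set avoiding e
  set D : ℕ → Finset ℕ := fun e => (F.filter (fun S => e ∉ S)).sup id with hDdef
  have hDmem : ∀ e ∈ Finset.range (n + 1), D e ∈ F := by
    intro e he
    obtain ⟨⟨T, hT, heT⟩, -⟩ := hsplit e he
    exact sup_mem_of_unionClosed hUC (Finset.filter_subset _ _)
      ⟨T, Finset.mem_filter.mpr ⟨hT, heT⟩⟩
  have hDnot : ∀ e, e ∉ D e := by
    intro e hmem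
    rw [hDdef] at hmem
    obtain ⟨V, hV, hmem⟩ := Finset.mem_sup.mp hmem
    exact (Finset.mem_filter.mp hV).2 hmem
  have hDle : ∀ e, ∀ S ∈ F, e ∉ S → S ⊆ D e := by
    intro e S hS heS
    exact Finset.le_sup (f := id) (Finset.mem_filter.mpr ⟨hS, heS⟩)
  -- D e ≠ U
  have hDU : ∀ e ∈ Finset.range (n + 1), D e ≠ U := by
    intro e he hcon
    obtain ⟨-, ⟨S, hS, heS⟩⟩ := hsplit e he
    have : e ∈ U := Finset.le_sup (f := id) hS heS
    rw [← hcon] at this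
    exact hDnot e this
  -- injectivity
  have hDinj : Set.InjOn D ↑(Finset.range (n + 1)) := by
    intro e he f hf heq
    by_contra hef
    obtain ⟨S, hS, hsep⟩ := hnequiv e (by simpa using he) f (by simpa using hf) hef
    by_cases heS : e ∈ S
    · have hfS : f ∉ S := fun h => hsep ⟨fun _ => h, fun _ => heS⟩
      have : e ∈ D f := hDle f S hS hfS heS
      rw [← heq] at this
      exact hDnot e this
    · have hfS : f ∈ S := by
        by_contra hfS
        exact hsep ⟨fun h => absurd h heS, fun h => absurd h hfS⟩
      have : f ∈ D e := hDle e S hS heS hfS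
      rw [heq] at this
      exact hDnot f this
  -- counting
  have hmaps : ∀ e ∈ Finset.range (n + 1), D e ∈ F.erase U := by
    intro e he
    exact Finset.mem_erase.mpr ⟨hDU e he, hDmem e he⟩
  have hle : (Finset.range (n + 1)).card ≤ (F.erase U).card :=
    Finset.card_le_card_of_injOn D hmaps hDinj
  rw [Finset.card_range, Finset.card_erase_of_mem hU, hcard] at hle
  omega

/-- The reduction step: from a union-closed family on `[n+1]` with `m ≤ n+1` sets,
produce one on `[n]` with the same size and no larger maximal degree. -/
lemma reduce {n m : ℕ} (F : Finset (Finset ℕ)) (hUC : UnionClosed F)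
    (hFam : FamilyOn (n + 1) F) (hcard : F.card = m) (hm : 2 ≤ m) (hmn : m ≤ n + 1) :
    ∃ F' : Finset (Finset ℕ), UnionClosed F' ∧ FamilyOn n F' ∧ F'.card = m ∧
      (Finset.range n).sup (degOf F') ≤ (Finset.range (n + 1)).sup (degOf F) := by
  obtain ⟨e, he, hinj⟩ := exists_erase_inj F hUC hcard hm hmn
  have hen : e < n + 1 := Finset.mem_range.mp he
  set σ : ℕ → ℕ := ⇑(Equiv.swap e n) with hσdef
  have hσinv : ∀ x, σ (σ x) = x := fun x => Equiv.swap_apply_self e n x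
  have hσinj : Function.Injective σ := (Equiv.swap e n).injective
  set g : Finset ℕ → Finset ℕ := fun S => (S.erase e).image σ with hgdef
  -- membership in g S
  have hmemg : ∀ (S : Finset ℕ) (x : ℕ), x ∈ g S ↔ (σ x ∈ S ∧ σ x ≠ e) := by
    intro S x
    simp only [hgdef, Finset.mem_image, Finset.mem_erase]
    constructor
    · rintro ⟨y, ⟨hy1, hy2⟩, rfl⟩
      rw [hσinv]; exact ⟨hy2, hy1⟩
    · rintro ⟨h1, h2⟩
      exact ⟨σ x, ⟨h2, h1⟩, hσinv x⟩
  -- g distributes over unions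
  have hgu : ∀ S T : Finset ℕ, g (S ∪ T) = g S ∪ g T := by
    intro S T
    simp only [hgdef, Finset.erase_union_distrib, Finset.image_union]
  -- g injective on F
  have hginj : Set.InjOn g ↑F := by
    intro S hS T hT hgeq
    apply hinj S hS T hT
    exact Finset.image_injective hσinj hgeq
  refine ⟨F.image g, ?_, ?_, ?_, ?_⟩
  · -- union-closed
    intro S' hS' T' hT'
    obtain ⟨S, hS, rfl⟩ := Finset.mem_image.mp hS'
    obtain ⟨T, hT, rfl⟩ := Finset.mem_image.mp hT'
    rw [← hgu]
    exact Finset.mem_image_of_mem g (hUC S hS T hT)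
  · -- family on [n]
    intro S' hS'
    obtain ⟨S, hS, rfl⟩ := Finset.mem_image.mp hS'
    intro x hx
    obtain ⟨h1, h2⟩ := (hmemg S x).mp hx
    have hσx : σ x < n + 1 := Finset.mem_range.mp (hFam S hS h1)
    rw [Finset.mem_range]
    have hs : σ x = if x = e then n else if x = n then e else x := by
      rw [hσdef]; exact Equiv.swap_apply_def e n x
    by_cases h1' : x = e
    · rw [if_pos h1'] at hs
      omega
    · rw [if_neg h1'] at hs
      by_cases h2' : x = n
      · rw [if_pos h2'] at hs
        exact absurd hs h2
      · rw [if_neg h2'] at hs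
        omega
  · -- cardinality
    rw [Finset.card_image_of_injOn hginj, hcard]
  · -- degree bound
    apply Finset.sup_le
    intro x hx
    have hx' : x < n := Finset.mem_range.mp hx
    have hσx : σ x ∈ Finset.range (n + 1) := by
      rw [Finset.mem_range]
      have hs : σ x = if x = e then n else if x = n then e else x := by
        rw [hσdef]; exact Equiv.swap_apply_def e n x
      split_ifs at hs <;> omega
    have key : degOf (F.image g) x ≤ degOf F (σ x) := by
      unfold degOf
      rw [Finset.filter_image]
      rw [Finset.card_image_of_injOn (hginj.mono (by
        intro S hS
        exact Finset.mem_coe.mpr (Finset.mem_of_mem_filter S (Finset.mem_coe.mp hS))))]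
      apply Finset.card_le_card
      intro S hS
      obtain ⟨hSF, hxg⟩ := Finset.mem_filter.mp hS
      exact Finset.mem_filter.mpr ⟨hSF, ((hmemg S x).mp hxg).1⟩
    exact key.trans (Finset.le_sup hσx)

/-- A chain witness: a union-closed family of any size `m ≤ n+1` on `[n]`. -/
lemma chain_witness (n m : ℕ) (hm : 1 ≤ m) (h : m ≤ n + 1) :
    ∃ F : Finset (Finset ℕ), UnionClosed F ∧ FamilyOn n F ∧ F.card = m := by
  refine ⟨(Finset.range m).image Finset.range, ?_, ?_, ?_⟩
  · intro S hS T hT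
    obtain ⟨i, hi, rfl⟩ := Finset.mem_image.mp hS
    obtain ⟨j, hj, rfl⟩ := Finset.mem_image.mp hT
    have : Finset.range i ∪ Finset.range j = Finset.range (max i j) := by
      ext x; simp [lt_max_iff]
    rw [this]
    exact Finset.mem_image_of_mem _ (Finset.mem_range.mpr
      (max_lt (Finset.mem_range.mp hi) (Finset.mem_range.mp hj)))
  · intro S hS
    obtain ⟨i, hi, rfl⟩ := Finset.mem_image.mp hS
    exact Finset.range_subset_range.mpr (by
      have := Finset.mem_range.mp hi; omega)
  · rw [Finset.card_image_of_injective _ (fun a b hab => by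
      simpa using congrArg Finset.card hab), Finset.card_range]

/-- For all positive integers `m, n` with `m ≥ 2` and `n ≥ m - 1`, one has
`g(n,m) = g(n+1,m)`. -/
theorem franklG_stable_of_ge (m n : ℕ) (hm : 2 ≤ m) (hn : 0 < n)
    (hnm : m - 1 ≤ n) :
    franklG n m = franklG (n + 1) m := by
  have hmn : m ≤ n + 1 := by omega
  -- nonemptiness of the defining sets
  have hAn : {a | ∃ F : Finset (Finset ℕ), UnionClosed F ∧ FamilyOn n F ∧ F.card = m ∧
      (Finset.range n).sup (degOf F) = a}.Nonempty := by
    obtain ⟨F, h1, h2, h3⟩ := chain_witness n m (by omega) hmn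
    exact ⟨_, F, h1, h2, h3, rfl⟩
  have hAn1 : {a | ∃ F : Finset (Finset ℕ), UnionClosed F ∧ FamilyOn (n + 1) F ∧ F.card = m ∧
      (Finset.range (n + 1)).sup (degOf F) = a}.Nonempty := by
    obtain ⟨F, h1, h2, h3⟩ := chain_witness (n + 1) m (by omega) (by omega)
    exact ⟨_, F, h1, h2, h3, rfl⟩
  apply le_antisymm
  · -- g n m ≤ g (n+1) m, via reduction
    obtain ⟨F, hUC, hFam, hcard, hsup⟩ := Nat.sInf_mem hAn1
    obtain ⟨F', h1, h2, h3, h4⟩ := reduce F hUC hFam hcard hm hmn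
    calc franklG n m ≤ (Finset.range n).sup (degOf F') :=
          Nat.sInf_le ⟨F', h1, h2, h3, rfl⟩
      _ ≤ (Finset.range (n + 1)).sup (degOf F) := h4
      _ = franklG (n + 1) m := hsup
  · -- g (n+1) m ≤ g n m : any family on [n] is a family on [n+1] with the same sup
    obtain ⟨F, hUC, hFam, hcard, hsup⟩ := Nat.sInf_mem hAn
    have hFam' : FamilyOn (n + 1) F := fun S hS =>
      (hFam S hS).trans (Finset.range_subset_range.mpr (by omega))
    have hdeg : degOf F n = 0 := by
      unfold degOf
      rw [Finset.card_eq_zero, Finset.filter_eq_empty_iff]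
      intro S hS hmem
      exact absurd (Finset.mem_range.mp (hFam S hS hmem)) (by omega)
    have hsup' : (Finset.range (n + 1)).sup (degOf F) = (Finset.range n).sup (degOf F) := by
      rw [Finset.range_add_one, Finset.sup_insert, hdeg]
      simp
    apply Nat.sInf_le
    exact ⟨F, hUC, hFam', hcard, by rw [hsup']; exact hsup⟩
end

section
/- Let a and n be positive integers with a < 2^{n-1}, and suppose there exists at least one union-closed family of subsets of [n] in which every element lies in at most a sets and every element of [n] is a non-trivial twin difference. Then f_t(n,a) < f_t(n,a+1). -/
lemma franklFt_bdd (n a : ℕ) : BddAbove {m | ∃ F : Finset (Finset ℕ), UnionClosed F ∧ FamilyOn n F ∧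
    (∀ e ∈ Finset.range n, degOf F e ≤ a) ∧
    (∀ e ∈ Finset.range n, NonTrivialTwinDiff n F e) ∧ F.card = m} := by
  refine ⟨2 ^ n, ?_⟩
  rintro m ⟨F, _, hFam, _, _, rfl⟩
  calc F.card ≤ (Finset.range n).powerset.card := by
        apply Finset.card_le_card
        intro S hS
        exact Finset.mem_powerset.mpr (hFam S hS)
    _ = 2 ^ n := by simp [Finset.card_powerset]

/-- `f_t` is strictly increasing in `a` when `a < 2^(n-1)` (provided `f_t(n,a)` is
defined, i.e., a valid family exists). -/
theorem franklFt_strictMono_a (a n : ℕ) (ha : 0 < a) (hn : 0 < n)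
    (hpow : a < 2 ^ (n - 1))
    (hex : ∃ F : Finset (Finset ℕ), UnionClosed F ∧ FamilyOn n F ∧
      (∀ e ∈ Finset.range n, degOf F e ≤ a) ∧
      (∀ e ∈ Finset.range n, NonTrivialTwinDiff n F e)) :
    franklFt n a < franklFt n (a + 1) := by
  have hne : {m | ∃ F : Finset (Finset ℕ), UnionClosed F ∧ FamilyOn n F ∧
      (∀ e ∈ Finset.range n, degOf F e ≤ a) ∧
      (∀ e ∈ Finset.range n, NonTrivialTwinDiff n F e) ∧ F.card = m}.Nonempty := by
    obtain ⟨F, h1, h2, h3, h4⟩ := hex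
    exact ⟨F.card, F, h1, h2, h3, h4, rfl⟩
  have hmem := Nat.sSup_mem hne (franklFt_bdd n a)
  obtain ⟨F, hUC, hFam, hdeg, htwin, hcard⟩ := hmem
  -- find a missing set of maximal cardinality
  have hDne : ((Finset.range n).powerset \ F).Nonempty := by
    by_contra hD
    rw [Finset.not_nonempty_iff_eq_empty, Finset.sdiff_eq_empty_iff_subset] at hD
    -- then all subsets of range n are in F, so degOf F 0 ≥ 2^(n-1)
    have h0 : (0 : ℕ) ∈ Finset.range n := Finset.mem_range.mpr hn
    have hkey : 2 ^ (n - 1) ≤ degOf F 0 := by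
      have hsub : (((Finset.range n).erase 0).powerset.image (insert 0)) ⊆
          F.filter (fun S => 0 ∈ S) := by
        intro S hS
        obtain ⟨s, hs, rfl⟩ := Finset.mem_image.mp hS
        rw [Finset.mem_powerset] at hs
        refine Finset.mem_filter.mpr ⟨hD ?_, Finset.mem_insert_self _ _⟩
        rw [Finset.mem_powerset]
        exact Finset.insert_subset h0 (hs.trans (Finset.erase_subset _ _))
      have hinj : Set.InjOn (insert 0) (↑(((Finset.range n).erase 0).powerset) : Set (Finset ℕ)) := by
        intro s hs t ht hst
        simp only [Finset.coe_powerset, Set.mem_preimage, Set.mem_powerset_iff,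
          Finset.mem_coe, Finset.coe_subset] at hs ht
        have h0s : 0 ∉ s := fun h => (Finset.mem_erase.mp (hs h)).1 rfl
        have h0t : 0 ∉ t := fun h => (Finset.mem_erase.mp (ht h)).1 rfl
        have := congrArg (Finset.erase · 0) hst
        simpa [Finset.erase_insert h0s, Finset.erase_insert h0t] using this
      have hcard2 : (((Finset.range n).erase 0).powerset.image (insert 0)).card
          = 2 ^ (n - 1) := by
        rw [Finset.card_image_of_injOn hinj, Finset.card_powerset,
          Finset.card_erase_of_mem h0, Finset.card_range]
      calc 2 ^ (n - 1) = _ := hcard2.symm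
        _ ≤ (F.filter (fun S => 0 ∈ S)).card := Finset.card_le_card hsub
        _ = degOf F 0 := rfl
    exact absurd (hkey.trans (hdeg 0 h0)) (not_le.mpr hpow)
  obtain ⟨T, hT, hTmax⟩ := Finset.exists_max_image _ Finset.card hDne
  rw [Finset.mem_sdiff, Finset.mem_powerset] at hT
  obtain ⟨hTsub, hTF⟩ := hT
  set F' := insert T F with hF'
  have hF'card : F'.card = F.card + 1 := Finset.card_insert_of_notMem hTF
  have hmemF' : ∀ S ∈ F, S ∈ F' := fun S hS => Finset.mem_insert_of_mem hS
  -- union with T stays in F'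
  have hunT : ∀ S ∈ F, S ∪ T ∈ F' := by
    intro S hS
    by_cases hST : S ⊆ T
    · rw [Finset.union_eq_right.mpr hST]; exact Finset.mem_insert_self _ _
    · have hsub : S ∪ T ⊆ Finset.range n := Finset.union_subset (hFam S hS) hTsub
      have hne2 : ¬ (S ∪ T ∈ (Finset.range n).powerset \ F) := by
        intro hmem
        have := hTmax _ hmem
        have hlt : T.card < (S ∪ T).card := by
          apply Finset.card_lt_card
          refine ⟨Finset.subset_union_right, fun h => hST (fun x hx => h (Finset.mem_union_left _ hx))⟩
        omega
      apply hmemF'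
      by_contra hnot
      exact hne2 (Finset.mem_sdiff.mpr ⟨Finset.mem_powerset.mpr hsub, hnot⟩)
  have hUC' : UnionClosed F' := by
    intro S hS S' hS'
    rcases Finset.mem_insert.mp hS with h1 | h1
    · rcases Finset.mem_insert.mp hS' with h2 | h2
      · rw [h1, h2, Finset.union_self]; exact Finset.mem_insert_self _ _
      · subst h1; rw [Finset.union_comm]; exact hunT _ h2
    · rcases Finset.mem_insert.mp hS' with h2 | h2
      · subst h2; exact hunT _ h1
      · exact hmemF' _ (hUC _ h1 _ h2)
  have hFam' : FamilyOn n F' := by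
    intro S hS
    rcases Finset.mem_insert.mp hS with rfl | hS
    · exact hTsub
    · exact hFam S hS
  have hdeg' : ∀ e ∈ Finset.range n, degOf F' e ≤ a + 1 := by
    intro e he
    have : degOf F' e ≤ degOf F e + 1 := by
      unfold degOf
      rw [hF', Finset.filter_insert]
      split
      · exact (Finset.card_insert_le _ _).trans (by omega)
      · omega
    exact this.trans (by have := hdeg e he; omega)
  have htwin' : ∀ e ∈ Finset.range n, NonTrivialTwinDiff n F' e := by
    intro e he
    obtain ⟨S, hS, h1, h2, h3⟩ := htwin e he
    exact ⟨S, hmemF' _ hS, h1, hmemF' _ h2, h3⟩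
  have hle : F.card + 1 ≤ franklFt n (a + 1) := by
    apply le_csSup (franklFt_bdd n (a + 1))
    exact ⟨F', hUC', hFam', hdeg', htwin', hF'card ▸ rfl⟩
  have hfa : franklFt n a = F.card := hcard.symm
  omega
end
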